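/- arXiv:1603.07681 — 2 statements merged into one kernel-verified Lean document; each statement's English description precedes it below -/
import Mathlib

section
/- For every 1 ≤ p < ∞ the natural map identifies L_p(μ) isometrically isomorphically with L_p(μ_loc): every f ∈ L_p(μ) belongs to L_p(μ_loc), and every f ∈ L_p(μ_loc) agrees μ_loc-a.e. with a function of the form 1_{A'}·f with A' ∈ 𝒜 σ-finite, which belongs to L_p(μ). -/
open MeasureTheory Set ENNReal

/-- A set `B` is locally measurable if `B ∩ A` is measurable for every measurable set `A`
of finite measure. -/
def LocallyMeasurable {Ω : Type*} [MeasurableSpace Ω] (μ : Measure Ω) (B : Set Ω) : Prop :=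
  ∀ A : Set Ω, MeasurableSet A → μ A < ∞ → MeasurableSet (B ∩ A)

/-- The σ-algebra `𝒜_loc` of locally measurable sets. -/
def locSpace {Ω : Type*} [MeasurableSpace Ω] (μ : Measure Ω) : MeasurableSpace Ω where
  MeasurableSet' := LocallyMeasurable μ
  measurableSet_empty := fun A hA _ => by
    rw [Set.empty_inter]; exact MeasurableSet.empty
  measurableSet_compl := fun B hB A hA hAfin => by
    have h : Bᶜ ∩ A = A \ (B ∩ A) := by ext x; by_cases hx : x ∈ B <;> simp [hx]
    rw [h]; exact hA.diff (hB A hA hAfin)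
  measurableSet_iUnion := fun s hs A hA hAfin => by
    rw [Set.iUnion_inter]
    exact MeasurableSet.iUnion fun n => hs n A hA hAfin

/-- `μ_loc B = sup { μ (B ∩ A) : A measurable, μ A < ∞ }`. -/
noncomputable def muLoc {Ω : Type*} [MeasurableSpace Ω] (μ : Measure Ω) (B : Set Ω) : ℝ≥0∞ :=
  ⨆ (A : Set Ω) (_ : MeasurableSet A ∧ μ A < ∞), μ (B ∩ A)

/-!
On a set covered by countably many measurable sets of finite `μ`-measure, `μ_loc` agrees with `μ`
and every locally measurable subset is measurable, so `L_p` norms for `μ` and `μ_loc` coincide for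
functions supported there. A function in `L_p` of either measure has such a σ-finite support up
to a null set: for `μ` this is standard, and for `μ_loc` every locally measurable `B` of finite
`μ_loc`-measure is exhausted, up to a `μ_loc`-null set, by the union of a sequence of sets of
finite `μ`-measure along which `μ (B ∩ A)` tends to its supremum `μ_loc B`.
-/

section LocalMeasure

variable {Ω : Type*} [MeasurableSpace Ω] {μ : Measure Ω}

def IsSigmaFiniteSet (μ : Measure Ω) (S : Set Ω) : Prop :=
  ∃ s : ℕ → Set Ω, (∀ n, MeasurableSet (s n) ∧ μ (s n) < ∞) ∧ S ⊆ ⋃ n, s n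

namespace IsSigmaFiniteSet

lemma mono {S T : Set Ω} (hT : IsSigmaFiniteSet μ T) (hST : S ⊆ T) : IsSigmaFiniteSet μ S :=
  let ⟨s, hs, hTs⟩ := hT
  ⟨s, hs, hST.trans hTs⟩

lemma iUnion {S : ℕ → Set Ω} (hS : ∀ n, IsSigmaFiniteSet μ (S n)) :
    IsSigmaFiniteSet μ (⋃ n, S n) := by
  choose s hs hSs using hS
  refine ⟨fun m => s m.unpair.1 m.unpair.2, fun m => hs _ _, ?_⟩
  rw [Set.iUnion_unpair fun i j => s i j]
  exact iUnion_mono hSs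

lemma of_sigmaFinite_restrict {S : Set Ω} (hS : MeasurableSet S) [SigmaFinite (μ.restrict S)] :
    IsSigmaFiniteSet μ S := by
  refine ⟨fun n => spanningSets (μ.restrict S) n ∩ S, fun n => ⟨?_, ?_⟩, ?_⟩
  · exact (measurableSet_spanningSets _ n).inter hS
  · rw [← Measure.restrict_apply (measurableSet_spanningSets _ n)]
    exact measure_spanningSets_lt_top _ n
  · rw [← iUnion_inter, iUnion_spanningSets, univ_inter]

end IsSigmaFiniteSet

lemma LocallyMeasurable.measurableSet {B : Set Ω} (hB : LocallyMeasurable μ B)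
    (hσ : IsSigmaFiniteSet μ B) : MeasurableSet B := by
  obtain ⟨s, hs, hBs⟩ := hσ
  rw [← inter_eq_left.2 hBs, inter_iUnion]
  exact .iUnion fun n => hB _ (hs n).1 (hs n).2

lemma LocallyMeasurable.inter_measurableSet {B A : Set Ω} (hB : LocallyMeasurable μ B)
    (hA : MeasurableSet A) : LocallyMeasurable μ (B ∩ A) := fun C hC hCμ => by
  rw [inter_right_comm]
  exact (hB C hC hCμ).inter hA

lemma le_locSpace : ‹MeasurableSpace Ω› ≤ locSpace μ := fun _ hA _ hC _ => hA.inter hC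

lemma muLoc_le_measure (B : Set Ω) : muLoc μ B ≤ μ B :=
  iSup₂_le fun _ _ => measure_mono inter_subset_left

lemma measure_inter_le_muLoc (B : Set Ω) {A : Set Ω} (hA : MeasurableSet A) (hAμ : μ A < ∞) :
    μ (B ∩ A) ≤ muLoc μ B :=
  le_iSup₂ (f := fun A (_ : MeasurableSet A ∧ μ A < ∞) => μ (B ∩ A)) A ⟨hA, hAμ⟩

lemma muLoc_eq_measure {B : Set Ω} (hσ : IsSigmaFiniteSet μ B) : muLoc μ B = μ B := by
  obtain ⟨s, hs, hBs⟩ := hσ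
  refine le_antisymm (muLoc_le_measure B) ?_
  have hacc : ∀ n, MeasurableSet (accumulate s n) ∧ μ (accumulate s n) < ∞ := fun n =>
    ⟨.biUnion (to_countable _) fun k _ => (hs k).1,
      measure_biUnion_lt_top (finite_le_nat n) fun k _ => (hs k).2⟩
  calc μ B = μ (⋃ n, B ∩ accumulate s n) := by
        rw [← inter_iUnion, iUnion_accumulate, inter_eq_left.2 hBs]
    _ = ⨆ n, μ (B ∩ accumulate s n) :=
        (monotone_const.inter monotone_accumulate).measure_iUnion
    _ ≤ muLoc μ B := iSup_le fun n => measure_inter_le_muLoc B (hacc n).1 (hacc n).2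

lemma exists_seq_muLoc_le_iSup (B : Set Ω) :
    ∃ U : ℕ → Set Ω, (∀ n, MeasurableSet (U n) ∧ μ (U n) < ∞) ∧
      muLoc μ B ≤ ⨆ n, μ (B ∩ U n) := by
  obtain ⟨u, -, hu, huS⟩ := exists_seq_tendsto_sSup
    (S := (fun A => μ (B ∩ A)) '' {A | MeasurableSet A ∧ μ A < ∞})
    ⟨_, ∅, ⟨.empty, by simp⟩, rfl⟩ (OrderTop.bddAbove _)
  choose U hU hUu using huS
  refine ⟨U, hU, ?_⟩
  have hsup : sSup ((fun A => μ (B ∩ A)) '' {A | MeasurableSet A ∧ μ A < ∞}) = muLoc μ B :=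
    sSup_image
  exact hsup ▸ le_of_tendsto' hu fun n => hUu n ▸ le_iSup (fun n => μ (B ∩ U n)) n

lemma Measurable.indicator_of_locSpace {E : Type*} [MeasurableSpace E] [Zero E] {g : Ω → E}
    (hg : Measurable[locSpace μ] g) {S : Set Ω} (hS : MeasurableSet S)
    (hσ : IsSigmaFiniteSet μ S) : Measurable (S.indicator g) := by
  intro T hT
  rw [indicator_preimage]
  have hgS : LocallyMeasurable μ (g ⁻¹' T ∩ S) := (hg hT).inter_measurableSet hS
  exact (hgS.measurableSet (hσ.mono inter_subset_right)).union ((measurable_const hT).diff hS)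

section CompatibleMeasure

variable {ν : @Measure Ω (locSpace μ)}

lemma measure_eq_of_isSigmaFiniteSet (hν : ∀ B, LocallyMeasurable μ B → ν B = muLoc μ B)
    {B : Set Ω} (hB : LocallyMeasurable μ B) (hσ : IsSigmaFiniteSet μ B) : ν B = μ B :=
  (hν B hB).trans (muLoc_eq_measure hσ)

lemma trim_le_of_eq_muLoc (hν : ∀ B, LocallyMeasurable μ B → ν B = muLoc μ B) :
    ν.trim le_locSpace ≤ μ :=
  Measure.le_iff.2 fun A hA => by
    rw [trim_measurableSet_eq _ hA, hν A (le_locSpace A hA)]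
    exact muLoc_le_measure A

lemma ae_of_ae_of_eq_muLoc (hν : ∀ B, LocallyMeasurable μ B → ν B = muLoc μ B)
    {P : Ω → Prop} (h : ∀ᵐ x ∂μ, P x) : ∀ᵐ x ∂ν, P x :=
  ae_of_ae_trim le_locSpace <|
    (Measure.absolutelyContinuous_of_le (trim_le_of_eq_muLoc hν)).ae_le h

lemma ae_restrict_of_ae_of_eq_muLoc (hν : ∀ B, LocallyMeasurable μ B → ν B = muLoc μ B)
    {S : Set Ω} (hS : MeasurableSet S) (hσ : IsSigmaFiniteSet μ S)
    {P : Ω → Prop} (h : ∀ᵐ x ∂ν, P x) : ∀ᵐ x ∂μ.restrict S, P x := by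
  obtain ⟨N, hPN, hN, hνN⟩ :=
    @exists_measurable_superset_of_null _ (locSpace μ) ν _ (ae_iff.1 h)
  have hNS : LocallyMeasurable μ (N ∩ S) := LocallyMeasurable.inter_measurableSet hN hS
  rw [ae_iff, Measure.restrict_apply' hS]
  refine measure_mono_null (inter_subset_inter_left _ hPN) ?_
  rw [← measure_eq_of_isSigmaFiniteSet hν hNS (hσ.mono inter_subset_right)]
  exact measure_mono_null inter_subset_left hνN

lemma restrict_trim_eq_of_eq_muLoc (hν : ∀ B, LocallyMeasurable μ B → ν B = muLoc μ B)
    {S : Set Ω} (hS : MeasurableSet S) (hσ : IsSigmaFiniteSet μ S) :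
    (ν.trim le_locSpace).restrict S = μ.restrict S := by
  ext T hT
  rw [Measure.restrict_apply hT, Measure.restrict_apply hT, trim_measurableSet_eq _ (hT.inter hS)]
  exact measure_eq_of_isSigmaFiniteSet hν (le_locSpace _ (hT.inter hS))
    (hσ.mono inter_subset_right)

lemma eLpNorm_eq_of_eq_muLoc (hν : ∀ B, LocallyMeasurable μ B → ν B = muLoc μ B)
    {E : Type*} [NormedAddCommGroup E] {g : Ω → E} (hg : StronglyMeasurable g)
    {S : Set Ω} (hS : MeasurableSet S) (hσ : IsSigmaFiniteSet μ S) (hgS : g.support ⊆ S)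
    (p : ℝ≥0∞) : eLpNorm g p ν = eLpNorm g p μ := by
  rw [← eLpNorm_trim le_locSpace hg, ← eLpNorm_restrict_eq_of_support_subset hgS,
    restrict_trim_eq_of_eq_muLoc hν hS hσ, eLpNorm_restrict_eq_of_support_subset hgS]

lemma exists_isSigmaFiniteSet_measure_diff_eq_zero_of_ne_top
    (hν : ∀ B, LocallyMeasurable μ B → ν B = muLoc μ B) {B : Set Ω}
    (hB : LocallyMeasurable μ B) (hνB : ν B ≠ ∞) :
    ∃ W, MeasurableSet W ∧ IsSigmaFiniteSet μ W ∧ ν (B \ W) = 0 := by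
  obtain ⟨U, hU, hBU⟩ := exists_seq_muLoc_le_iSup (μ := μ) B
  have hW : MeasurableSet (⋃ n, U n) := .iUnion fun n => (hU n).1
  have hBW : LocallyMeasurable μ (B ∩ ⋃ n, U n) := hB.inter_measurableSet hW
  have hle : ν B ≤ ν (B ∩ ⋃ n, U n) := calc
    ν B = muLoc μ B := hν B hB
    _ ≤ ⨆ n, μ (B ∩ U n) := hBU
    _ ≤ μ (B ∩ ⋃ n, U n) :=
        iSup_le fun n => measure_mono (inter_subset_inter_right _ (subset_iUnion U n))
    _ = ν (B ∩ ⋃ n, U n) :=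
        (measure_eq_of_isSigmaFiniteSet hν hBW ⟨U, hU, inter_subset_right⟩).symm
  refine ⟨⋃ n, U n, hW, ⟨U, hU, subset_rfl⟩, ?_⟩
  rw [← sdiff_self_inter, measure_sdiff inter_subset_left
    (show MeasurableSet[locSpace μ] _ from hBW).nullMeasurableSet
    (ne_top_of_le_ne_top hνB (measure_mono inter_subset_left)), tsub_eq_zero_of_le hle]

lemma exists_isSigmaFiniteSet_measure_diff_eq_zero_of_sigmaFinite
    (hν : ∀ B, LocallyMeasurable μ B → ν B = muLoc μ B) {B : Set Ω}
    (hB : LocallyMeasurable μ B) [SigmaFinite (ν.restrict B)] :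
    ∃ W, MeasurableSet W ∧ IsSigmaFiniteSet μ W ∧ ν (B \ W) = 0 := by
  set K := spanningSets (ν.restrict B)
  have hK : ∀ n, LocallyMeasurable μ (K n ∩ B) := fun n =>
    MeasurableSet.inter (m := locSpace μ) (measurableSet_spanningSets _ n) hB
  have hνK : ∀ n, ν (K n ∩ B) ≠ ∞ := fun n => by
    rw [← Measure.restrict_apply (measurableSet_spanningSets _ n)]
    exact (measure_spanningSets_lt_top _ n).ne
  choose W hW hWσ hKW using fun n =>
    exists_isSigmaFiniteSet_measure_diff_eq_zero_of_ne_top hν (hK n) (hνK n)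
  refine ⟨⋃ n, W n, .iUnion hW, .iUnion hWσ, measure_mono_null ?_ (measure_iUnion_null hKW)⟩
  rintro x ⟨hxB, hxW⟩
  obtain ⟨n, hxK⟩ := mem_iUnion.1 (iUnion_spanningSets (ν.restrict B) ▸ mem_univ x)
  exact mem_iUnion.2 ⟨n, ⟨hxK, hxB⟩, fun hx => hxW (mem_iUnion.2 ⟨n, hx⟩)⟩

lemma memLp_locSpace_and_eLpNorm_eq_of_memLp
    (hν : ∀ B, LocallyMeasurable μ B → ν B = muLoc μ B)
    {E : Type*} [NormedAddCommGroup E] {f : Ω → E} {p : ℝ≥0∞} (hf : MemLp f p μ)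
    (hp0 : p ≠ 0) (hp : p ≠ ∞) : MemLp f p ν ∧ eLpNorm f p ν = eLpNorm f p μ := by
  obtain ⟨g, hg, hfg⟩ := hf.aestronglyMeasurable
  have hgLp : MemLp g p μ := hf.ae_eq hfg
  obtain ⟨t, ht, hgt, _⟩ :=
    (hgLp.finStronglyMeasurable_of_stronglyMeasurable hg hp0 hp).exists_set_sigmaFinite
  have hfgν : f =ᵐ[ν] g := ae_of_ae_of_eq_muLoc hν hfg
  have hnorm : eLpNorm f p ν = eLpNorm f p μ := by
    rw [eLpNorm_congr_ae hfgν, eLpNorm_congr_ae hfg,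
      eLpNorm_eq_of_eq_muLoc hν hg ht (.of_sigmaFinite_restrict ht)
        (Function.support_subset_iff'.2 hgt)]
  exact ⟨⟨⟨g, hg.mono le_locSpace, hfgν⟩, hnorm ▸ hf.eLpNorm_lt_top⟩, hnorm⟩

lemma exists_isSigmaFiniteSet_ae_eq_indicator_of_memLp
    (hν : ∀ B, LocallyMeasurable μ B → ν B = muLoc μ B)
    {E : Type*} [NormedAddCommGroup E] [MeasurableSpace E] [BorelSpace E]
    [SecondCountableTopology E] {f : Ω → E} {p : ℝ≥0∞} (hf : MemLp f p ν)
    (hp0 : p ≠ 0) (hp : p ≠ ∞) :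
    ∃ W, MeasurableSet W ∧ IsSigmaFiniteSet μ W ∧
      (∀ᵐ x ∂ν, f x = W.indicator f x) ∧ MemLp (W.indicator f) p μ := by
  obtain ⟨g, hg, hfg⟩ := hf.aestronglyMeasurable
  have hgLp : MemLp g p ν := hf.ae_eq hfg
  obtain ⟨t, ht, hgt, _⟩ :=
    (hgLp.finStronglyMeasurable_of_stronglyMeasurable hg hp0 hp).exists_set_sigmaFinite
  obtain ⟨W, hW, hWσ, htW⟩ :=
    exists_isSigmaFiniteSet_measure_diff_eq_zero_of_sigmaFinite hν ht
  refine ⟨W, hW, hWσ, ?_, ?_⟩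
  · filter_upwards [hfg, measure_eq_zero_iff_ae_notMem.1 htW] with x hfgx hxtW
    by_cases hxW : x ∈ W
    · rw [indicator_of_mem hxW]
    · rw [indicator_of_notMem hxW, hfgx, hgt x fun hxt => hxtW ⟨hxt, hxW⟩]
  · have hgW : Measurable (W.indicator g) := hg.measurable.indicator_of_locSpace hW hWσ
    have hfgW : W.indicator f =ᵐ[μ] W.indicator g :=
      (ae_eq_restrict_iff_indicator_ae_eq hW).1 (ae_restrict_of_ae_of_eq_muLoc hν hW hWσ hfg)
    refine ⟨hgW.aestronglyMeasurable.congr hfgW.symm, ?_⟩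
    rw [eLpNorm_congr_ae hfgW,
      ← eLpNorm_eq_of_eq_muLoc hν hgW.stronglyMeasurable hW hWσ support_indicator_subset]
    exact (eLpNorm_indicator_le g).trans_lt hgLp.eLpNorm_lt_top

end CompatibleMeasure

end LocalMeasure

/-- `L_p(μ)` is naturally identified with `L_p(μ_loc)` (for `1 ≤ p < ∞`): every
`f ∈ L_p(μ)` belongs to `L_p(μ_loc)` with the same norm, and every `f ∈ L_p(μ_loc)`
agrees `μ_loc`-a.e. with a function `1_{A'}·f`, `A' ∈ 𝒜` σ-finite, which lies in
`L_p(μ)`. Here `ν` is the measure on `𝒜_loc` induced by `μ_loc`. -/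
theorem lp_muLoc_identification {Ω : Type*} [MeasurableSpace Ω] (μ : Measure Ω)
    (p : ℝ≥0∞) (hp : 1 ≤ p) (hp' : p ≠ ∞)
    (ν : @Measure Ω (locSpace μ)) (hν : ∀ B : Set Ω, LocallyMeasurable μ B → ν B = muLoc μ B) :
    (∀ f : Ω → ℝ, MemLp f p μ →
      @MemLp Ω ℝ (locSpace μ) _ _ f p ν ∧ @eLpNorm Ω ℝ _ (locSpace μ) f p ν = eLpNorm f p μ) ∧
    (∀ f : Ω → ℝ, @MemLp Ω ℝ (locSpace μ) _ _ f p ν →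
      ∃ A' : Set Ω, MeasurableSet A' ∧
        (∃ s : ℕ → Set Ω, (∀ n, MeasurableSet (s n) ∧ μ (s n) < ∞) ∧ A' ⊆ ⋃ n, s n) ∧
        (∀ᵐ x ∂ν, f x = A'.indicator f x) ∧ MemLp (A'.indicator f) p μ) := by
  have hp0 : p ≠ 0 := (zero_lt_one.trans_le hp).ne'
  exact ⟨fun _ hf => memLp_locSpace_and_eLpNorm_eq_of_memLp hν hf hp0 hp',
    fun _ hf => exists_isSigmaFiniteSet_ae_eq_indicator_of_memLp hν hf hp0 hp'⟩
end

section
/- A measure space (Ω, 𝒜, μ) is localisable if and only if it is semi-finite and for every consistent family (A')_{A ∈ 𝒜_fin} with A' ∈ 𝒜, A' ⊆ A, there exists Ω₀ ∈ 𝒜 such that A' = Ω₀ ∩ A up to μ-null sets for all A ∈ 𝒜_fin. -/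
open MeasureTheory Set ENNReal symmDiff

/-- A measure space is semi-finite if every measurable set of infinite measure contains
a measurable subset of finite positive measure. -/
def SemiFinite {Ω : Type*} [MeasurableSpace Ω] (μ : Measure Ω) : Prop :=
  ∀ B : Set Ω, MeasurableSet B → μ B = ∞ →
    ∃ A : Set Ω, MeasurableSet A ∧ A ⊆ B ∧ 0 < μ A ∧ μ A < ∞

/-- A measure space is localisable if it is semi-finite and every family of measurable
sets has an essential supremum. -/
def Localisable {Ω : Type*} [MeasurableSpace Ω] (μ : Measure Ω) : Prop :=
  SemiFinite μ ∧
  ∀ E : Set (Set Ω), (∀ B ∈ E, MeasurableSet B) →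
    ∃ S : Set Ω, MeasurableSet S ∧ (∀ B ∈ E, μ (B \ S) = 0) ∧
      ∀ C : Set Ω, MeasurableSet C → (∀ B ∈ E, μ (B \ C) = 0) → μ (S \ C) = 0

/-!
If `S` is an essential supremum of the sets `A'`, consistency makes `Aᶜ ∪ A'` an essential upper
bound of the family, which forces `A' = S ∩ A` up to null sets. Conversely, given a family `E`,
inside each set `A` of finite measure a countable subfamily of `E` whose union has maximal measure
in `A` covers every member of `E` up to a null set. The sets `A' := A ∩ ⋃ (that subfamily)` form a
consistent family, and a set `Ω₀` gluing it is an essential supremum of `E`: by semi-finiteness a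
measurable set is null as soon as all its subsets of finite measure are.
-/

section

open Filter

variable {Ω : Type*} [MeasurableSpace Ω] {μ : Measure Ω}

def IsEssSup (μ : Measure Ω) (E : Set (Set Ω)) (S : Set Ω) : Prop :=
  (∀ B ∈ E, μ (B \ S) = 0) ∧
    ∀ C : Set Ω, MeasurableSet C → (∀ B ∈ E, μ (B \ C) = 0) → μ (S \ C) = 0

lemma SemiFinite.measure_eq_zero_of_forall_subset (hμ : SemiFinite μ) {s : Set Ω}
    (hs : MeasurableSet s) (h : ∀ A ⊆ s, MeasurableSet A → μ A < ∞ → μ A = 0) : μ s = 0 := by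
  by_contra hpos
  obtain hinf | hfin := eq_or_ne (μ s) ∞
  · obtain ⟨A, hA, hAs, hApos, hAfin⟩ := hμ s hs hinf
    exact hApos.ne' (h A hAs hA hAfin)
  · exact hpos (h s subset_rfl hs hfin.lt_top)

lemma inter_sUnion_ae_le_of_forall {T : Set (Set Ω)} (hT : T.Countable) {B U : Set Ω}
    (h : ∀ C ∈ T, (B ∩ C : Set Ω) ≤ᵐ[μ] U) : (B ∩ ⋃₀ T : Set Ω) ≤ᵐ[μ] U := by
  filter_upwards [(eventually_countable_ball hT).2 h] with x hx ⟨hxB, C, hC, hxC⟩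
  exact hx C hC ⟨hxB, hxC⟩

theorem exists_countable_subset_forall_ae_le_sUnion [IsFiniteMeasure μ] {E : Set (Set Ω)}
    (hE : ∀ B ∈ E, MeasurableSet B) : ∃ T ⊆ E, T.Countable ∧ ∀ B ∈ E, B ≤ᵐ[μ] ⋃₀ T := by
  set 𝒞 : Set (Set (Set Ω)) := {T | T ⊆ E ∧ T.Countable}
  obtain ⟨u, -, hu, hu𝒞⟩ := exists_seq_tendsto_sSup
    ⟨_, mem_image_of_mem (fun T => μ (⋃₀ T)) (show ∅ ∈ 𝒞 from ⟨empty_subset E, countable_empty⟩)⟩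
    (OrderTop.bddAbove _)
  choose T hT𝒞 hTu using hu𝒞
  have hU : ⋃ n, T n ∈ 𝒞 :=
    ⟨iUnion_subset fun n => (hT𝒞 n).1, countable_iUnion fun n => (hT𝒞 n).2⟩
  have hmax : ∀ T' ∈ 𝒞, μ (⋃₀ T') ≤ μ (⋃₀ ⋃ n, T n) := fun T' hT' =>
    (le_sSup (mem_image_of_mem _ hT')).trans <| le_of_tendsto' hu fun n =>
      hTu n ▸ measure_mono (sUnion_mono (subset_iUnion T n))
  refine ⟨⋃ n, T n, hU.1, hU.2, fun B hB => ?_⟩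
  have hB𝒞 : insert B (⋃ n, T n) ∈ 𝒞 := ⟨insert_subset hB hU.1, hU.2.insert B⟩
  have hUm : MeasurableSet (⋃₀ ⋃ n, T n) := .sUnion hU.2 fun C hC => hE C (hU.1 hC)
  exact (subset_sUnion_of_mem (mem_insert B _)).eventuallyLE.trans_eq
    (ae_eq_of_subset_of_measure_ge (sUnion_mono (subset_insert _ _)) (hmax _ hB𝒞)
      hUm.nullMeasurableSet (measure_ne_top _ _)).symm

def IsCountableEssCoverOn (μ : Measure Ω) (A : Set Ω) (E T : Set (Set Ω)) : Prop :=
  T ⊆ E ∧ T.Countable ∧ ∀ B ∈ E, (A ∩ B : Set Ω) ≤ᵐ[μ] ⋃₀ T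

lemma exists_isCountableEssCoverOn {A : Set Ω} (hA : MeasurableSet A) (hAfin : μ A ≠ ∞)
    {E : Set (Set Ω)} (hE : ∀ B ∈ E, MeasurableSet B) : ∃ T, IsCountableEssCoverOn μ A E T := by
  have := isFiniteMeasure_restrict.2 hAfin
  obtain ⟨T, hTE, hTc, hT⟩ := exists_countable_subset_forall_ae_le_sUnion (μ := μ.restrict A) hE
  refine ⟨T, hTE, hTc, fun B hB => ?_⟩
  filter_upwards [(ae_restrict_iff' hA).1 (hT B hB)] with x hx ⟨hxA, hxB⟩ using hx hxA hxB

namespace IsCountableEssCoverOn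

variable {A B : Set Ω} {E T T' : Set (Set Ω)}

lemma measurableSet_sUnion (hT : IsCountableEssCoverOn μ A E T)
    (hE : ∀ B ∈ E, MeasurableSet B) : MeasurableSet (⋃₀ T) :=
  .sUnion hT.2.1 fun C hC => hE C (hT.1 hC)

lemma inter_sUnion_inter_ae_le (hT : IsCountableEssCoverOn μ A E T)
    (hT' : IsCountableEssCoverOn μ B E T') :
    (A ∩ ⋃₀ T ∩ B : Set Ω) ≤ᵐ[μ] (B ∩ ⋃₀ T' ∩ A : Set Ω) := by
  have hB : (B ∩ ⋃₀ T : Set Ω) ≤ᵐ[μ] ⋃₀ T' :=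
    inter_sUnion_ae_le_of_forall hT.2.1 fun C hC => hT'.2.2 C (hT.1 hC)
  filter_upwards [hB] with x hx ⟨⟨hxA, hxT⟩, hxB⟩ using ⟨⟨hxB, hx ⟨hxB, hxT⟩⟩, hxA⟩

end IsCountableEssCoverOn

lemma isEssSup_of_forall_ae_eq_inter (hμ : SemiFinite μ) {E : Set (Set Ω)}
    (hE : ∀ B ∈ E, MeasurableSet B) {T : Set Ω → Set (Set Ω)}
    (hT : ∀ A, MeasurableSet A → μ A < ∞ → IsCountableEssCoverOn μ A E (T A))
    {Ω₀ : Set Ω} (hΩ₀m : MeasurableSet Ω₀)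
    (hΩ₀ : ∀ A, MeasurableSet A → μ A < ∞ → (A ∩ ⋃₀ T A : Set Ω) =ᵐ[μ] (Ω₀ ∩ A : Set Ω)) :
    IsEssSup μ E Ω₀ := by
  refine ⟨fun B hB => ?_, fun C hC hEC => ?_⟩
  · refine hμ.measure_eq_zero_of_forall_subset ((hE B hB).diff hΩ₀m) fun A hAB hA hAfin => ?_
    have hAΩ₀ : A ≤ᵐ[μ] Ω₀ := by
      filter_upwards [(hT A hA hAfin).2.2 B hB, hΩ₀ A hA hAfin] with x hcov heq hxA
      exact (heq.mp ⟨hxA, hcov ⟨hxA, (hAB hxA).1⟩⟩).1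
    rwa [ae_le_set, (disjoint_of_subset_left hAB disjoint_sdiff_left).sdiff_eq_left] at hAΩ₀
  · refine hμ.measure_eq_zero_of_forall_subset (hΩ₀m.diff hC) fun A hAΩ₀ hA hAfin => ?_
    have hcov : (A ∩ ⋃₀ T A : Set Ω) ≤ᵐ[μ] C :=
      inter_sUnion_ae_le_of_forall (hT A hA hAfin).2.1 fun D hD =>
        inter_subset_right.eventuallyLE.trans (ae_le_set.2 (hEC D ((hT A hA hAfin).1 hD)))
    have hAC : A ≤ᵐ[μ] C := by
      filter_upwards [hcov, hΩ₀ A hA hAfin] with x hcov heq hxA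
      exact hcov (heq.mpr ⟨(hAΩ₀ hxA).1, hxA⟩)
    rwa [ae_le_set, (disjoint_of_subset_left hAΩ₀ disjoint_sdiff_left).sdiff_eq_left] at hAC

lemma IsEssSup.measure_symmDiff_inter_eq_zero {F : Set Ω → Set Ω}
    (hF : ∀ A, MeasurableSet A → μ A < ∞ → MeasurableSet (F A) ∧ F A ⊆ A)
    (hcons : ∀ A B, MeasurableSet A → μ A < ∞ → MeasurableSet B → μ B < ∞ →
      μ ((F A ∩ B) ∆ (F B ∩ A)) = 0)
    {S : Set Ω} (hS : IsEssSup μ (F '' {A | MeasurableSet A ∧ μ A < ∞}) S)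
    {A : Set Ω} (hA : MeasurableSet A) (hAfin : μ A < ∞) : μ (F A ∆ (S ∩ A)) = 0 := by
  have hFS : F A ≤ᵐ[μ] S := ae_le_set.2 (hS.1 _ ⟨A, ⟨hA, hAfin⟩, rfl⟩)
  have hSF : S ≤ᵐ[μ] (Aᶜ ∪ F A : Set Ω) := by
    refine ae_le_set.2 (hS.2 _ (hA.compl.union (hF A hA hAfin).1) ?_)
    rintro _ ⟨B, ⟨hB, hBfin⟩, rfl⟩
    refine measure_mono_null (fun x ⟨hxB, hx⟩ => ?_) (hcons B A hB hBfin hA hAfin)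
    simp only [mem_union, mem_compl_iff, not_or, not_not] at hx
    exact Or.inl ⟨⟨hxB, hx.1⟩, fun h => hx.2 h.1⟩
  refine measure_symmDiff_eq_zero_iff.2 (EventuallyLE.antisymm ?_ ?_)
  · filter_upwards [hFS] with x hx hxF using ⟨hx hxF, (hF A hA hAfin).2 hxF⟩
  · filter_upwards [hSF] with x hx ⟨hxS, hxA⟩ using (hx hxS).resolve_left (not_not.2 hxA)

end

/-- A measure space is localisable iff it is semi-finite and every consistent family
`(A')_{A ∈ 𝒜_fin}` of measurable subsets `A' ⊆ A` (consistent: `A' ∩ B = B' ∩ A` up to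
null sets) is of the form `A' = Ω₀ ∩ A` up to null sets for a single measurable `Ω₀`. -/
theorem localisable_iff_consistent_families {Ω : Type*} [MeasurableSpace Ω] (μ : Measure Ω) :
    Localisable μ ↔
      SemiFinite μ ∧
      ∀ F : Set Ω → Set Ω,
        (∀ A : Set Ω, MeasurableSet A → μ A < ∞ → MeasurableSet (F A) ∧ F A ⊆ A) →
        (∀ A B : Set Ω, MeasurableSet A → μ A < ∞ → MeasurableSet B → μ B < ∞ →
          μ ((F A ∩ B) ∆ (F B ∩ A)) = 0) →
        ∃ Ω₀ : Set Ω, MeasurableSet Ω₀ ∧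
          ∀ A : Set Ω, MeasurableSet A → μ A < ∞ → μ (F A ∆ (Ω₀ ∩ A)) = 0 := by
  constructor
  · rintro ⟨hμ, hess⟩
    refine ⟨hμ, fun F hF hcons => ?_⟩
    obtain ⟨S, hSm, hS⟩ := hess (F '' {A | MeasurableSet A ∧ μ A < ∞}) <| by
      rintro _ ⟨A, ⟨hA, hAfin⟩, rfl⟩
      exact (hF A hA hAfin).1
    exact ⟨S, hSm, fun A hA hAfin => IsEssSup.measure_symmDiff_inter_eq_zero hF hcons hS hA hAfin⟩
  · rintro ⟨hμ, hglue⟩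
    refine ⟨hμ, fun E hE => ?_⟩
    choose! T hT using fun A (hA : MeasurableSet A) (hAfin : μ A < ∞) =>
      exists_isCountableEssCoverOn hA hAfin.ne hE
    obtain ⟨Ω₀, hΩ₀m, hΩ₀⟩ := hglue (fun A => A ∩ ⋃₀ T A)
      (fun A hA hAfin => ⟨hA.inter ((hT A hA hAfin).measurableSet_sUnion hE), inter_subset_left⟩)
      (fun A B hA hAfin hB hBfin => measure_symmDiff_eq_zero_iff.2 <|
        ((hT A hA hAfin).inter_sUnion_inter_ae_le (hT B hB hBfin)).antisymm
          ((hT B hB hBfin).inter_sUnion_inter_ae_le (hT A hA hAfin)))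
    exact ⟨Ω₀, hΩ₀m, isEssSup_of_forall_ae_eq_inter hμ hE hT hΩ₀m fun A hA hAfin =>
      measure_symmDiff_eq_zero_iff.1 (hΩ₀ A hA hAfin)⟩
end
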